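/- arXiv:1810.01740 — 7 statements merged into one kernel-verified Lean document; each statement's English description precedes it below -/
import Mathlib

section
/- In the resource competition game with parameter r ≥ 1, the unique pair (x₁, x₂) with x₁ > 0 and x₂ > 0 satisfying simultaneously x₁ = max(√(x₂/r) − x₂/r, 0) and x₂ = max(√(r·x₁) − r·x₁, 0) is x₁ = x₂ = r/(1+r)². Moreover, at this BB (Nash) equilibrium the payoffs are u₁ = r²/(1+r)² and u₂ = 1/(1+r)². -/
/-- Player 1's payoff in the resource competition game. -/
noncomputable def rcU1 (r x₁ x₂ : ℝ) : ℝ := r * x₁ / (r * x₁ + x₂) - x₁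

/-- Player 2's payoff in the resource competition game. -/
noncomputable def rcU2 (r x₁ x₂ : ℝ) : ℝ := x₂ / (r * x₁ + x₂) - x₂

/-- Player 1's B-response in the resource competition game. -/
noncomputable def rcF1B (r x₂ : ℝ) : ℝ := max (Real.sqrt (x₂ / r) - x₂ / r) 0

/-- Player 2's B-response in the resource competition game. -/
noncomputable def rcF2B (r x₁ : ℝ) : ℝ := max (Real.sqrt (r * x₁) - r * x₁) 0

/-- In the resource competition game with `r ≥ 1`, the unique
positive crossing point of the two B-responses (the BB/Nash equilibrium) is
`x₁ = x₂ = r/(1+r)²`, where the payoffs are `r²/(1+r)²` and `1/(1+r)²`. -/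
theorem rc_bb_equilibrium (r : ℝ) (hr : 1 ≤ r) :
    (∀ x₁ x₂ : ℝ, 0 < x₁ → 0 < x₂ →
      ((x₁ = rcF1B r x₂ ∧ x₂ = rcF2B r x₁) ↔
        (x₁ = r / (1 + r) ^ 2 ∧ x₂ = r / (1 + r) ^ 2))) ∧
    rcU1 r (r / (1 + r) ^ 2) (r / (1 + r) ^ 2) = r ^ 2 / (1 + r) ^ 2 ∧
    rcU2 r (r / (1 + r) ^ 2) (r / (1 + r) ^ 2) = 1 / (1 + r) ^ 2 := by
  have hr0 : (0:ℝ) < r := lt_of_lt_of_le one_pos hr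
  have h1r : (0:ℝ) < 1 + r := by linarith
  have h1r' : (1 + r : ℝ) ≠ 0 := ne_of_gt h1r
  refine ⟨?_, ?_, ?_⟩
  · intro x₁ x₂ hx₁ hx₂
    constructor
    · rintro ⟨h1, h2⟩
      set s := Real.sqrt (x₂ / r) with hs_def
      set t := Real.sqrt (r * x₁) with ht_def
      have hs2 : s ^ 2 = x₂ / r := Real.sq_sqrt (by positivity)
      have ht2 : t ^ 2 = r * x₁ := Real.sq_sqrt (by positivity)
      have hs0 : 0 < s := Real.sqrt_pos.mpr (by positivity)
      have ht0 : 0 < t := Real.sqrt_pos.mpr (by positivity)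
      have e1 : x₁ = s - x₂ / r := by
        rw [rcF1B] at h1
        rcases max_cases (s - x₂ / r) 0 with ⟨h, _⟩ | ⟨h, _⟩
        · rw [h1, h]
        · exfalso; rw [h1, h] at hx₁; exact lt_irrefl 0 hx₁
      have e2 : x₂ = t - r * x₁ := by
        rw [rcF2B] at h2
        rcases max_cases (t - r * x₁) 0 with ⟨h, _⟩ | ⟨h, _⟩
        · rw [h2, h]
        · exfalso; rw [h2, h] at hx₂; exact lt_irrefl 0 hx₂
      -- x₁ = s - s², x₂ = t - t², t² = r x₁, x₂ = r s²
      have ex2 : x₂ = r * s ^ 2 := by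
        field_simp at hs2; linarith [hs2]
      have e1' : x₁ = s - s ^ 2 := by
        rw [e1, ex2]; field_simp
      have e2' : x₂ = t - t ^ 2 := by rw [e2, ← ht2]
      have hts : t = r * s := by
        have h1 : t ^ 2 = r * s - r * s ^ 2 := by rw [ht2, e1']; ring
        have h2 : t - t ^ 2 = r * s ^ 2 := by rw [← e2', ex2]
        linarith
      have hkey : r * s + s = 1 := by
        have hz : r * s * (r * s + s - 1) = 0 := by
          have h1 : t ^ 2 = r * s - r * s ^ 2 := by rw [ht2, e1']; ring
          rw [hts] at h1
          nlinarith [h1]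
        rcases mul_eq_zero.mp hz with h | h
        · exfalso; nlinarith
        · linarith
      have hs_eq : s = 1 / (1 + r) := by
        field_simp; linarith
      constructor
      · rw [e1', hs_eq]; field_simp; ring
      · rw [ex2, hs_eq]; field_simp
    · rintro ⟨hx1, hx2⟩
      have hq : x₂ / r = 1 / (1 + r) ^ 2 := by rw [hx2]; field_simp
      have hq2 : r * x₁ = (r / (1 + r)) ^ 2 := by rw [hx1]; field_simp
      have hsq : Real.sqrt (x₂ / r) = 1 / (1 + r) := by
        rw [hq]
        rw [show (1 / (1 + r) ^ 2 : ℝ) = (1 / (1 + r)) ^ 2 by rw [div_pow, one_pow]]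
        exact Real.sqrt_sq (by positivity)
      have hsq2 : Real.sqrt (r * x₁) = r / (1 + r) := by
        rw [hq2]; exact Real.sqrt_sq (by positivity)
      constructor
      · rw [rcF1B, hsq, hq, hx1, max_eq_left]
        · field_simp; ring
        · rw [show (1 / (1 + r) - 1 / (1 + r) ^ 2 : ℝ) = r / (1 + r) ^ 2 by field_simp; ring]
          positivity
      · rw [rcF2B, hsq2, hq2, hx2, max_eq_left]
        · field_simp; ring
        · rw [show (r / (1 + r) - (r / (1 + r)) ^ 2 : ℝ) = r / (1 + r) ^ 2 by field_simp; ring]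
          positivity
  · rw [rcU1]
    have hd : r * (r / (1 + r) ^ 2) + r / (1 + r) ^ 2 = r / (1 + r) := by field_simp; ring
    rw [hd]; field_simp; ring
  · rw [rcU2]
    have hd : r * (r / (1 + r) ^ 2) + r / (1 + r) ^ 2 = r / (1 + r) := by field_simp; ring
    rw [hd]
    rw [div_sub_div _ _ (by positivity) (by positivity), div_eq_div_iff (by positivity) (by positivity)]
    field_simp; ring
end

section
/- In the resource competition game with parameter r ≥ 1, define g(x₁) = u₁(x₁, f₂ᴮ(x₁)) for x₁ > 0, where f₂ᴮ(x₁) = max(√(r·x₁) − r·x₁, 0). Then g attains its maximum over (0, ∞) at the unique point x₁ = r/4 if 1 ≤ r < 2, and at the unique point x₁ = 1/r if r ≥ 2. Consequently the LB (Stackelberg) equilibrium is (x₁ᴸᴮ, x₂ᴸᴮ) = (r/4, (r/2)(1 − r/2)) with payoffs (u₁ᴸᴮ, u₂ᴸᴮ) = (r/4, (1 − r/2)²) when 1 ≤ r < 2, and (x₁ᴸᴮ, x₂ᴸᴮ) = (1/r, 0) with payoffs (1 − 1/r, 0) when r ≥ 2. -/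
/-- Player 1's payoff along player 2's B-response. -/
noncomputable def rcG (r x₁ : ℝ) : ℝ := rcU1 r x₁ (rcF2B r x₁)

lemma rcG_low (r x : ℝ) (hr : 0 < r) (hx : 0 < x) (h : r * x ≤ 1) :
    rcG r x = Real.sqrt (r * x) - x := by
  have ht : 0 < r * x := mul_pos hr hx
  have hs : 0 < Real.sqrt (r * x) := Real.sqrt_pos.2 ht
  have hsq : Real.sqrt (r * x) ^ 2 = r * x := Real.sq_sqrt ht.le
  have hs1 : Real.sqrt (r * x) ≤ 1 := by
    nlinarith
  have hle : r * x ≤ Real.sqrt (r * x) := by nlinarith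
  unfold rcG rcU1 rcF2B
  rw [max_eq_left (by linarith)]
  have h2 : r * x + (Real.sqrt (r * x) - r * x) = Real.sqrt (r * x) := by ring
  rw [h2]
  rw [Real.div_sqrt]

lemma rcG_high (r x : ℝ) (h : 1 ≤ r * x) : rcG r x = 1 - x := by
  have ht : 0 < r * x := lt_of_lt_of_le one_pos h
  have hsq : Real.sqrt (r * x) ^ 2 = r * x := Real.sq_sqrt ht.le
  have hle : Real.sqrt (r * x) ≤ r * x := by
    nlinarith [sq_nonneg (Real.sqrt (r * x) - 1), Real.sqrt_nonneg (r * x)]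
  unfold rcG rcU1 rcF2B
  rw [max_eq_right (by linarith), add_zero, div_self ht.ne']

lemma sqrt_key (r x : ℝ) (hr : 0 < r) (hx : 0 ≤ x) :
    Real.sqrt (r * x) ≤ x + r / 4 := by
  have h : r * x ≤ (x + r / 4) ^ 2 := by nlinarith [sq_nonneg (x - r / 4)]
  calc Real.sqrt (r * x) ≤ Real.sqrt ((x + r / 4) ^ 2) := Real.sqrt_le_sqrt h
    _ = x + r / 4 := Real.sqrt_sq (by linarith)

lemma sqrt_key_strict (r x : ℝ) (hr : 0 < r) (hx : 0 < x) (hne : x ≠ r / 4) :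
    Real.sqrt (r * x) < x + r / 4 := by
  have h0 : (x - r / 4) ^ 2 > 0 :=
    (sq_nonneg _).lt_of_ne (Ne.symm (pow_ne_zero 2 (sub_ne_zero.2 hne)))
  have h : r * x < (x + r / 4) ^ 2 := by nlinarith
  have hy : 0 < x + r / 4 := by linarith
  rw [show x + r/4 = Real.sqrt ((x + r/4)^2) from (Real.sqrt_sq hy.le).symm]
  exact Real.sqrt_lt_sqrt (by positivity) h

lemma sqrt_key2 (r x : ℝ) (hr : 2 ≤ r) (hx : 0 ≤ x) (hxe : x ≤ 1 / r) :
    Real.sqrt (r * x) ≤ x + (1 - 1 / r) := by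
  have hr0 : 0 < r := by linarith
  have hid : (x + (1 - 1/r)) ^ 2 - r * x = (1/r - x) * ((r - 2 + 1/r) - x) := by
    field_simp; ring
  have h1 : 0 ≤ 1/r - x := by linarith
  have h2 : 0 ≤ (r - 2 + 1/r) - x := by
    have : (0:ℝ) < 1/r := by positivity
    linarith
  have h : r * x ≤ (x + (1 - 1/r)) ^ 2 := by nlinarith [mul_nonneg h1 h2]
  have hc : (0:ℝ) < 1 - 1/r := by
    have : 1/r ≤ 1/2 := by
      rw [div_le_div_iff₀ hr0 (by norm_num)]; linarith
    linarith
  calc Real.sqrt (r * x) ≤ Real.sqrt ((x + (1 - 1/r)) ^ 2) := Real.sqrt_le_sqrt h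
    _ = x + (1 - 1/r) := Real.sqrt_sq (by linarith)

lemma sqrt_key2_strict (r x : ℝ) (hr : 2 ≤ r) (hx : 0 < x) (hxe : x < 1 / r) :
    Real.sqrt (r * x) < x + (1 - 1 / r) := by
  have hr0 : 0 < r := by linarith
  have hid : (x + (1 - 1/r)) ^ 2 - r * x = (1/r - x) * ((r - 2 + 1/r) - x) := by
    field_simp; ring
  have h1 : 0 < 1/r - x := by linarith
  have h2 : 0 < (r - 2 + 1/r) - x := by
    have : x < 1/r := hxe
    linarith
  have h : r * x < (x + (1 - 1/r)) ^ 2 := by nlinarith [mul_pos h1 h2]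
  have hc : (0:ℝ) < 1 - 1/r := by
    have : 1/r ≤ 1/2 := by
      rw [div_le_div_iff₀ hr0 (by norm_num)]; linarith
    linarith
  rw [show x + (1 - 1/r) = Real.sqrt ((x + (1 - 1/r))^2) from (Real.sqrt_sq (by linarith)).symm]
  exact Real.sqrt_lt_sqrt (by positivity) h

/-- `g(x₁) = u₁(x₁, f₂ᴮ(x₁))` attains its maximum over `(0, ∞)`
at the unique point `r/4` if `1 ≤ r < 2` and `1/r` if `r ≥ 2`; the resulting LB
(Stackelberg) equilibrium and payoffs are as stated. -/
theorem rc_lb_equilibrium (r : ℝ) (hr : 1 ≤ r) :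
    (r < 2 →
      (∀ x₁ : ℝ, 0 < x₁ → rcG r x₁ ≤ rcG r (r / 4)) ∧
      (∀ x₁ : ℝ, 0 < x₁ →
        (∀ y : ℝ, 0 < y → rcG r y ≤ rcG r x₁) → x₁ = r / 4) ∧
      rcF2B r (r / 4) = (r / 2) * (1 - r / 2) ∧
      rcU1 r (r / 4) ((r / 2) * (1 - r / 2)) = r / 4 ∧
      rcU2 r (r / 4) ((r / 2) * (1 - r / 2)) = (1 - r / 2) ^ 2) ∧
    (2 ≤ r →
      (∀ x₁ : ℝ, 0 < x₁ → rcG r x₁ ≤ rcG r (1 / r)) ∧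
      (∀ x₁ : ℝ, 0 < x₁ →
        (∀ y : ℝ, 0 < y → rcG r y ≤ rcG r x₁) → x₁ = 1 / r) ∧
      rcF2B r (1 / r) = 0 ∧
      rcU1 r (1 / r) 0 = 1 - 1 / r ∧
      rcU2 r (1 / r) 0 = 0) := by
  have hr0 : 0 < r := lt_of_lt_of_le one_pos hr
  constructor
  · intro hr2
    have hq : 0 < r / 4 := by linarith
    have hrq : r * (r / 4) ≤ 1 := by nlinarith
    have hsq : Real.sqrt (r * (r / 4)) = r / 2 := by
      rw [show r * (r / 4) = (r / 2) ^ 2 by ring, Real.sqrt_sq (by linarith)]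
    have hGq : rcG r (r / 4) = r / 4 := by
      rw [rcG_low r (r / 4) hr0 hq hrq, hsq]; ring
    have hmaxle : ∀ x₁ : ℝ, 0 < x₁ → rcG r x₁ ≤ rcG r (r / 4) := by
      intro x hx
      rw [hGq]
      rcases le_or_gt (r * x) 1 with h | h
      · rw [rcG_low r x hr0 hx h]
        have := sqrt_key r x hr0 hx.le
        linarith
      · rw [rcG_high r x h.le]
        have hx1 : 1 / r < x := by rw [div_lt_iff₀ hr0]; linarith
        nlinarith [sq_nonneg (r - 2)]
    refine ⟨hmaxle, ?_, ?_, ?_, ?_⟩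
    · intro x hx hmax
      have h1 := hmax (r / 4) hq
      rw [hGq] at h1
      by_contra hne
      rcases le_or_gt (r * x) 1 with h | h
      · rw [rcG_low r x hr0 hx h] at h1
        have := sqrt_key_strict r x hr0 hx hne
        linarith
      · rw [rcG_high r x h.le] at h1
        have hx1 : 1 / r < x := by rw [div_lt_iff₀ hr0]; linarith
        nlinarith [sq_nonneg (r - 2)]
    · unfold rcF2B
      rw [hsq, max_eq_left (by nlinarith)]
      ring
    · unfold rcU1
      have h2 : r * (r / 4) + r / 2 * (1 - r / 2) = r / 2 := by ring
      rw [h2, show r * (r / 4) = (r / 2) * (r / 2) by ring,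
        mul_div_assoc, div_self (by linarith : (r : ℝ) / 2 ≠ 0)]
      ring
    · unfold rcU2
      have h2 : r * (r / 4) + r / 2 * (1 - r / 2) = r / 2 := by ring
      rw [h2]
      field_simp
  · intro hr2
    have he : 0 < 1 / r := by positivity
    have hre : r * (1 / r) = 1 := by field_simp
    have hGe : rcG r (1 / r) = 1 - 1 / r := by
      rw [rcG_high r (1 / r) (le_of_eq hre.symm)]
    have hmaxle : ∀ x₁ : ℝ, 0 < x₁ → rcG r x₁ ≤ rcG r (1 / r) := by
      intro x hx
      rw [hGe]
      rcases le_or_gt (r * x) 1 with h | h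
      · rw [rcG_low r x hr0 hx h]
        have hxe : x ≤ 1 / r := by rw [le_div_iff₀ hr0]; linarith [h]
        have := sqrt_key2 r x hr2 hx.le hxe
        linarith
      · rw [rcG_high r x h.le]
        have hx1 : 1 / r < x := by rw [div_lt_iff₀ hr0]; linarith
        linarith
    refine ⟨hmaxle, ?_, ?_, ?_, ?_⟩
    · intro x hx hmax
      have h1 := hmax (1 / r) he
      rw [hGe] at h1
      by_contra hne
      rcases le_or_gt (r * x) 1 with h | h
      · rw [rcG_low r x hr0 hx h] at h1
        have hxe : x ≤ 1 / r := by rw [le_div_iff₀ hr0]; linarith [h]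
        have hxlt : x < 1 / r := lt_of_le_of_ne hxe hne
        have := sqrt_key2_strict r x hr2 hx hxlt
        linarith
      · rw [rcG_high r x h.le] at h1
        have hx1 : 1 / r < x := by rw [div_lt_iff₀ hr0]; linarith
        linarith
    · unfold rcF2B
      rw [hre, Real.sqrt_one]
      simp
    · unfold rcU1
      rw [hre]
      norm_num
    · unfold rcU2
      rw [hre]
      norm_num
end

section
/- In the resource competition game with parameter r > 1, let (x₁ᴮᴮ, x₂ᴮᴮ) = (r/(1+r)², r/(1+r)²) with payoffs u₁ᴮᴮ = r²/(1+r)², u₂ᴮᴮ = 1/(1+r)², and let the LB equilibrium be (x₁ᴸᴮ, x₂ᴸᴮ) = (r/4, (r/2)(1 − r/2)) with payoffs (r/4, (1 − r/2)²) if 1 < r < 2, and (1/r, 0) with payoffs (1 − 1/r, 0) if r ≥ 2. Then x₁ᴸᴮ > x₁ᴮᴮ, x₂ᴸᴮ < x₂ᴮᴮ, u₁ᴸᴮ > u₁ᴮᴮ, and u₂ᴸᴮ < u₂ᴮᴮ: the superior player's one-sided learning increases his/her own cost and payoff while decreasing the other's cost and payoff. -/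
/-- In the resource competition game with `r > 1`, comparing the
LB (Stackelberg) equilibrium to the BB (Nash) equilibrium: the superior
player's one-sided learning increases his/her own cost and payoff while
decreasing the other's cost and payoff: `x₁ᴸᴮ > x₁ᴮᴮ`, `x₂ᴸᴮ < x₂ᴮᴮ`,
`u₁ᴸᴮ > u₁ᴮᴮ`, `u₂ᴸᴮ < u₂ᴮᴮ`. -/
theorem rc_lb_vs_bb (r : ℝ) (hr : 1 < r) :
    (r < 2 →
      r / 4 > r / (1 + r) ^ 2 ∧
      (r / 2) * (1 - r / 2) < r / (1 + r) ^ 2 ∧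
      r / 4 > r ^ 2 / (1 + r) ^ 2 ∧
      (1 - r / 2) ^ 2 < 1 / (1 + r) ^ 2) ∧
    (2 ≤ r →
      1 / r > r / (1 + r) ^ 2 ∧
      (0 : ℝ) < r / (1 + r) ^ 2 ∧
      1 - 1 / r > r ^ 2 / (1 + r) ^ 2 ∧
      (0 : ℝ) < 1 / (1 + r) ^ 2) := by
  have h0 : (0:ℝ) < r := by linarith
  have hs : (0:ℝ) < (1 + r) ^ 2 := by positivity
  refine ⟨fun h2 => ⟨?_, ?_, ?_, ?_⟩, fun h2 => ⟨?_, ?_, ?_, ?_⟩⟩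
  · rw [gt_iff_lt, div_lt_div_iff₀ hs (by norm_num)]; nlinarith [sq_nonneg (r-1)]
  · rw [lt_div_iff₀ hs]
    nlinarith [mul_pos h0 (mul_pos (pow_pos (sub_pos.mpr hr) 2) (by linarith : (0:ℝ) < r + 2))]
  · rw [gt_iff_lt, div_lt_div_iff₀ hs (by norm_num)]
    nlinarith [mul_pos h0 (pow_pos (sub_pos.mpr hr) 2)]
  · rw [lt_div_iff₀ hs]
    have ht : (0:ℝ) < 2 + r - r ^ 2 := by nlinarith [mul_pos (sub_pos.mpr h2) (by linarith : (0:ℝ) < 1 + r)]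
    have ht2 : 2 + r - r ^ 2 < 2 := by nlinarith
    nlinarith [mul_pos ht (by linarith : (0:ℝ) < 2 - (2 + r - r ^ 2))]
  · rw [gt_iff_lt, div_lt_div_iff₀ hs h0]; nlinarith [sq_nonneg (r-1)]
  · positivity
  · have : (1:ℝ) - 1 / r = (r - 1) / r := by field_simp
    rw [gt_iff_lt, this, div_lt_div_iff₀ hs h0]; nlinarith
  · positivity
end

section
/- In the resource competition game with parameter r ≥ 1, define h(x₂) = u₂(f₁ᴮ(x₂), x₂) for x₂ > 0, where f₁ᴮ(x₂) = max(√(x₂/r) − x₂/r, 0). Then h attains its maximum over (0, ∞) at the unique point x₂ = 1/(4r). Consequently the BL (Stackelberg) equilibrium is (x₁ᴮᴸ, x₂ᴮᴸ) = ((1/(2r))(1 − 1/(2r)), 1/(4r)) with payoffs (u₁ᴮᴸ, u₂ᴮᴸ) = ((1 − 1/(2r))², 1/(4r)). -/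
/-- Player 2's payoff along player 1's B-response. -/
noncomputable def rcH (r x₂ : ℝ) : ℝ := rcU2 r (rcF1B r x₂) x₂

lemma rcH_eq_low (r x : ℝ) (hr : 1 ≤ r) (hx : 0 < x) (hxr : x ≤ r) :
    rcH r x = Real.sqrt (x / r) - x := by
  have hr0 : (0:ℝ) < r := lt_of_lt_of_le one_pos hr
  have hdp : 0 < x / r := div_pos hx hr0
  set s := Real.sqrt (x / r) with hs
  have hsp : 0 < s := Real.sqrt_pos.mpr hdp
  have hs2 : s ^ 2 = x / r := Real.sq_sqrt hdp.le
  have hle1 : x / r ≤ 1 := (div_le_one hr0).mpr hxr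
  have h1 : x / r ≤ s := by nlinarith
  have hmax : max (s - x / r) 0 = s - x / r := max_eq_left (by linarith)
  have hxe : x = r * s ^ 2 := by field_simp at hs2; linarith
  have hden : r * (s - x / r) + x = r * s := by field_simp; ring
  have hfrac : x / (r * s) = s := by
    rw [hxe]; field_simp
  simp only [rcH, rcF1B, rcU2, ← hs, hmax, hden, hfrac]

lemma rcH_eq_high (r x : ℝ) (hr : 1 ≤ r) (hx : 0 < x) (hxr : r ≤ x) :
    rcH r x = 1 - x := by
  have hr0 : (0:ℝ) < r := lt_of_lt_of_le one_pos hr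
  have hdp : 0 < x / r := div_pos hx hr0
  have hge1 : 1 ≤ x / r := (one_le_div hr0).mpr hxr
  have hs2 : Real.sqrt (x / r) ^ 2 = x / r := Real.sq_sqrt hdp.le
  have hsp : 0 < Real.sqrt (x / r) := Real.sqrt_pos.mpr hdp
  have h1 : Real.sqrt (x / r) ≤ x / r := by nlinarith
  have hmax : max (Real.sqrt (x / r) - x / r) 0 = 0 := max_eq_right (by linarith)
  simp only [rcH, rcF1B, rcU2, hmax, mul_zero, zero_add]
  rw [div_self hx.ne']

lemma rcH_at_opt (r : ℝ) (hr : 1 ≤ r) : rcH r (1 / (4 * r)) = 1 / (4 * r) := by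
  have hr0 : (0:ℝ) < r := lt_of_lt_of_le one_pos hr
  have hx : (0:ℝ) < 1 / (4 * r) := by positivity
  have hxr : 1 / (4 * r) ≤ r := by
    rw [div_le_iff₀ (by positivity)]; nlinarith
  rw [rcH_eq_low r _ hr hx hxr]
  have h1 : (1 / (4 * r)) / r = (1 / (2 * r)) ^ 2 := by field_simp; ring
  rw [h1, Real.sqrt_sq (by positivity)]
  field_simp; ring

/-- `h(x₂) = u₂(f₁ᴮ(x₂), x₂)` attains its maximum over `(0, ∞)`
at the unique point `1/(4r)`; the resulting BL (Stackelberg) equilibrium is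
`((1/(2r))(1 − 1/(2r)), 1/(4r))` with payoffs `((1 − 1/(2r))², 1/(4r))`. -/
theorem rc_bl_equilibrium (r : ℝ) (hr : 1 ≤ r) :
    (∀ x₂ : ℝ, 0 < x₂ → rcH r x₂ ≤ rcH r (1 / (4 * r))) ∧
    (∀ x₂ : ℝ, 0 < x₂ →
      (∀ y : ℝ, 0 < y → rcH r y ≤ rcH r x₂) → x₂ = 1 / (4 * r)) ∧
    rcF1B r (1 / (4 * r)) = (1 / (2 * r)) * (1 - 1 / (2 * r)) ∧
    rcU1 r ((1 / (2 * r)) * (1 - 1 / (2 * r))) (1 / (4 * r)) =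
      (1 - 1 / (2 * r)) ^ 2 ∧
    rcU2 r ((1 / (2 * r)) * (1 - 1 / (2 * r))) (1 / (4 * r)) =
      1 / (4 * r) := by
  have hr0 : (0:ℝ) < r := lt_of_lt_of_le one_pos hr
  have ha : (0:ℝ) < 1 / (4 * r) := by positivity
  have har : (4 * r) * (1 / (4 * r)) = 1 := by field_simp
  have hopt := rcH_at_opt r hr
  -- part 1 : maximality
  have hmaxle : ∀ x₂ : ℝ, 0 < x₂ → rcH r x₂ ≤ 1 / (4 * r) := by
    intro x hx
    rcases le_or_gt x r with hxr | hxr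
    · rw [rcH_eq_low r x hr hx hxr]
      have hsle : Real.sqrt (x / r) ≤ x + 1 / (4 * r) := by
        have h2 : x / r ≤ (x + 1 / (4 * r)) ^ 2 := by
          rw [div_le_iff₀ hr0]
          nlinarith [mul_nonneg hr0.le (sq_nonneg (x - 1 / (4 * r))), sq_nonneg (x - 1/(4*r))]
        calc Real.sqrt (x / r) ≤ Real.sqrt ((x + 1 / (4 * r)) ^ 2) :=
              Real.sqrt_le_sqrt h2
          _ = x + 1 / (4 * r) := Real.sqrt_sq (by positivity)
      linarith
    · rw [rcH_eq_high r x hr hx hxr.le]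
      have : x > 1 := lt_of_le_of_lt hr hxr
      linarith
  refine ⟨fun x hx => by rw [hopt]; exact hmaxle x hx, ?_, ?_, ?_, ?_⟩
  · -- uniqueness
    intro x hx hmax
    have h1 : rcH r x = 1 / (4 * r) := by
      have := hmax (1 / (4 * r)) ha
      rw [hopt] at this
      exact le_antisymm (hmaxle x hx) this
    rcases le_or_gt x r with hxr | hxr
    · rw [rcH_eq_low r x hr hx hxr] at h1
      have heq : Real.sqrt (x / r) = x + 1 / (4 * r) := by linarith
      have hs2 : Real.sqrt (x / r) ^ 2 = x / r :=
        Real.sq_sqrt (div_pos hx hr0).le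
      rw [heq] at hs2
      have hz : r * (x - 1 / (4 * r)) ^ 2 = 0 := by
        have hx' : x = r * (x + 1 / (4 * r)) ^ 2 := by
          field_simp at hs2 ⊢; nlinarith [hs2]
        nlinarith [hx', har]
      have := mul_eq_zero.mp hz
      rcases this with h | h
      · exact absurd h hr0.ne'
      · have := pow_eq_zero_iff (n := 2) (by norm_num) |>.mp h
        linarith
    · rw [rcH_eq_high r x hr hx hxr.le] at h1
      have hx1 : x > 1 := lt_of_le_of_lt hr hxr
      have : 1 / (4 * r) > 0 := ha
      linarith
  · -- rcF1B value
    have h1 : (1 / (4 * r)) / r = (1 / (2 * r)) ^ 2 := by field_simp; ring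
    simp only [rcF1B, h1, Real.sqrt_sq (by positivity : (0:ℝ) ≤ 1 / (2 * r))]
    rw [max_eq_left]
    · field_simp
    · have ht1 : 1 / (2 * r) ≤ 1 := by
        rw [div_le_one (by positivity)]; linarith
      have ht0 : (0:ℝ) < 1 / (2 * r) := by positivity
      nlinarith
  · -- rcU1
    have hden : r * ((1 / (2 * r)) * (1 - 1 / (2 * r))) + 1 / (4 * r) = 1 / 2 := by
      field_simp; ring
    simp only [rcU1, hden]
    field_simp
  · -- rcU2
    have hden : r * ((1 / (2 * r)) * (1 - 1 / (2 * r))) + 1 / (4 * r) = 1 / 2 := by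
      field_simp; ring
    simp only [rcU2, hden]
    field_simp; ring
end

section
/- In the resource competition game with parameter r > 1, let (x₁ᴮᴮ, x₂ᴮᴮ) = (r/(1+r)², r/(1+r)²) with payoffs u₁ᴮᴮ = r²/(1+r)², u₂ᴮᴮ = 1/(1+r)², and let (x₁ᴮᴸ, x₂ᴮᴸ) = ((1/(2r))(1 − 1/(2r)), 1/(4r)) with payoffs u₁ᴮᴸ = (1 − 1/(2r))², u₂ᴮᴸ = 1/(4r). Then x₁ᴮᴸ < x₁ᴮᴮ, x₂ᴮᴸ < x₂ᴮᴮ, u₁ᴮᴸ > u₁ᴮᴮ, and u₂ᴮᴸ > u₂ᴮᴮ: the inferior player's one-sided learning decreases both players' costs and increases both players' payoffs. -/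
/-!
With `a = 1 / (2r)` and `b = 1 / (1 + r)`, the BB quantities are `x₁ᴮᴮ = b (1 - b)` and
`u₁ᴮᴮ = (1 - b)²`, while `x₁ᴮᴸ = a (1 - a)` and `u₁ᴮᴸ = (1 - a)²`. For `r > 1` we have
`1 + r < 2r`, hence `a < b < 1/2`; since `t ↦ t (1 - t)` increases on `t ≤ 1/2` and
`t ↦ (1 - t)²` decreases on `t ≤ 1`, player 1 pays less and earns more. The same inequality
`1 + r < 2r` gives `x₂ᴮᴸ = r / (2r)² < r / (1 + r)²`, and `u₂ᴮᴸ > u₂ᴮᴮ` is the strict AM-GM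
inequality `4r < (1 + r)²`.
-/

lemma mul_one_sub_lt_mul_one_sub {s t : ℝ} (hst : s < t) (hsum : s + t < 1) :
    s * (1 - s) < t * (1 - t) := by
  have hdiff : t * (1 - t) - s * (1 - s) = (t - s) * (1 - s - t) := by ring
  have hpos : 0 < (t - s) * (1 - s - t) := mul_pos (by linarith) (by linarith)
  linarith

lemma four_mul_lt_sq_add {a b : ℝ} (hab : a ≠ b) : 4 * a * b < (a + b) ^ 2 := by
  have hsq : 0 < (a - b) ^ 2 := by positivity [sub_ne_zero.2 hab]
  nlinarith

/-- In the resource competition game with `r > 1`, comparing the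
BL (Stackelberg) equilibrium to the BB (Nash) equilibrium: the inferior
player's one-sided learning decreases both players' costs and increases both
players' payoffs: `x₁ᴮᴸ < x₁ᴮᴮ`, `x₂ᴮᴸ < x₂ᴮᴮ`, `u₁ᴮᴸ > u₁ᴮᴮ`,
`u₂ᴮᴸ > u₂ᴮᴮ`. -/
theorem rc_bl_vs_bb (r : ℝ) (hr : 1 < r) :
    (1 / (2 * r)) * (1 - 1 / (2 * r)) < r / (1 + r) ^ 2 ∧
    1 / (4 * r) < r / (1 + r) ^ 2 ∧
    (1 - 1 / (2 * r)) ^ 2 > r ^ 2 / (1 + r) ^ 2 ∧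
    1 / (4 * r) > 1 / (1 + r) ^ 2 := by
  have hr0 : 0 < r := by linarith
  have hlt : 1 + r < 2 * r := by linarith
  have hab : 1 / (2 * r) < 1 / (1 + r) := one_div_lt_one_div_of_lt (by positivity) hlt
  have hb : 1 / (1 + r) < 1 / 2 := one_div_lt_one_div_of_lt two_pos (by linarith)
  have hx₁ : r / (1 + r) ^ 2 = 1 / (1 + r) * (1 - 1 / (1 + r)) := by field_simp; ring
  have hu₁ : r ^ 2 / (1 + r) ^ 2 = (1 - 1 / (1 + r)) ^ 2 := by field_simp; ring
  refine ⟨?_, ?_, ?_, ?_⟩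
  · rw [hx₁]
    exact mul_one_sub_lt_mul_one_sub hab (by linarith)
  · calc 1 / (4 * r) = r / (2 * r) ^ 2 := by field_simp; ring
      _ < r / (1 + r) ^ 2 :=
        div_lt_div_of_pos_left hr0 (by positivity) (pow_lt_pow_left₀ hlt (by positivity) two_ne_zero)
  · rw [hu₁, gt_iff_lt]
    exact pow_lt_pow_left₀ (by linarith) (by linarith) two_ne_zero
  · have hamgm := four_mul_lt_sq_add (show (1 : ℝ) ≠ r from hr.ne)
    rw [mul_one] at hamgm
    exact one_div_lt_one_div_of_lt (by positivity) hamgm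
end

section
/- In the resource competition game with parameter r = 1, the LB (Stackelberg) equilibrium coincides with the BB (Nash) equilibrium: the maximizer over x₁ > 0 of x₁ ↦ u₁(x₁, f₂ᴮ(x₁)) is x₁ = 1/4, and f₂ᴮ(1/4) = 1/4, so that (x₁ᴸᴮ, x₂ᴸᴮ) = (1/4, 1/4) = (x₁ᴮᴮ, x₂ᴮᴮ); similarly the maximizer over x₂ > 0 of x₂ ↦ u₂(f₁ᴮ(x₂), x₂) is x₂ = 1/4 and f₁ᴮ(1/4) = 1/4, so the BL equilibrium also equals (1/4, 1/4). -/
/-!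
Since `x + f₂ᴮ(x) = max (√x) x ≥ √x` and `u₁(x, ·)` is antitone, the leader's payoff
`u₁(x, f₂ᴮ(x))` is at most `√x - x = 1/4 - (√x - 1/2)²`, which is `≤ 1/4` with equality
only at `x = 1/4`; there the bound is attained since `f₂ᴮ(1/4) = 1/4`. For `r = 1` the game
is symmetric, so player 2 as leader faces the same problem.
-/

lemma sqrt_sub_self_le_quarter {x : ℝ} (hx : 0 ≤ x) : √x - x ≤ 1 / 4 := by
  nlinarith [sq_nonneg (√x - 1 / 2), Real.sq_sqrt hx]

lemma eq_quarter_of_quarter_le_sqrt_sub_self {x : ℝ} (hx : 0 ≤ x) (h : 1 / 4 ≤ √x - x) :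
    x = 1 / 4 := by
  have hsqrt : √x = 1 / 2 := by nlinarith [sq_nonneg (√x - 1 / 2), Real.sq_sqrt hx]
  rw [← Real.sq_sqrt hx, hsqrt]
  norm_num

lemma sqrt_le_add_rcF2B_one (x : ℝ) : √x ≤ x + rcF2B 1 x := by
  have := le_max_left (√x - x) 0
  rw [rcF2B, one_mul]
  linarith

lemma rcU1_one_rcF2B_one_le_sqrt_sub_self {x : ℝ} (hx : 0 < x) :
    rcU1 1 x (rcF2B 1 x) ≤ √x - x := by
  have hshare : x / (x + rcF2B 1 x) ≤ x / √x :=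
    div_le_div_of_nonneg_left hx.le (Real.sqrt_pos.mpr hx) (sqrt_le_add_rcF2B_one x)
  rw [rcU1, one_mul, ← Real.div_sqrt]
  linarith

lemma rcU1_one_rcF2B_one_le_quarter {x : ℝ} (hx : 0 < x) : rcU1 1 x (rcF2B 1 x) ≤ 1 / 4 :=
  (rcU1_one_rcF2B_one_le_sqrt_sub_self hx).trans (sqrt_sub_self_le_quarter hx.le)

lemma eq_quarter_of_quarter_le_rcU1_one_rcF2B_one {x : ℝ} (hx : 0 < x)
    (h : 1 / 4 ≤ rcU1 1 x (rcF2B 1 x)) : x = 1 / 4 :=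
  eq_quarter_of_quarter_le_sqrt_sub_self hx.le
    (h.trans (rcU1_one_rcF2B_one_le_sqrt_sub_self hx))

lemma sqrt_one_div_four : √(1 / 4 : ℝ) = 1 / 2 := by
  rw [show (1 / 4 : ℝ) = (1 / 2) ^ 2 by norm_num, Real.sqrt_sq (by norm_num)]

lemma rcF2B_one_quarter : rcF2B 1 (1 / 4) = 1 / 4 := by
  rw [rcF2B, one_mul, sqrt_one_div_four]
  norm_num

lemma rcU1_one_quarter_rcF2B_one : rcU1 1 (1 / 4) (rcF2B 1 (1 / 4)) = 1 / 4 := by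
  rw [rcF2B_one_quarter, rcU1]
  norm_num

lemma rcU2_one (x₁ x₂ : ℝ) : rcU2 1 x₁ x₂ = rcU1 1 x₂ x₁ := by
  rw [rcU2, rcU1, one_mul, one_mul, add_comm]

lemma rcF1B_one : rcF1B 1 = rcF2B 1 := by
  ext x
  rw [rcF1B, rcF2B, div_one, one_mul]

/-- In the resource competition game with `r = 1`, the LB and BL
(Stackelberg) equilibria coincide with the BB (Nash) equilibrium `(1/4, 1/4)`:
the unique maximizer over `x₁ > 0` of `x₁ ↦ u₁(x₁, f₂ᴮ(x₁))` is `1/4` with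
`f₂ᴮ(1/4) = 1/4`, and similarly for player 2. -/
theorem rc_r_eq_one_stackelberg_eq_nash :
    (∀ x₁ : ℝ, 0 < x₁ →
      rcU1 1 x₁ (rcF2B 1 x₁) ≤ rcU1 1 (1 / 4) (rcF2B 1 (1 / 4))) ∧
    (∀ x₁ : ℝ, 0 < x₁ →
      (∀ y : ℝ, 0 < y → rcU1 1 y (rcF2B 1 y) ≤ rcU1 1 x₁ (rcF2B 1 x₁)) →
      x₁ = 1 / 4) ∧
    rcF2B 1 (1 / 4) = 1 / 4 ∧
    (∀ x₂ : ℝ, 0 < x₂ →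
      rcU2 1 (rcF1B 1 x₂) x₂ ≤ rcU2 1 (rcF1B 1 (1 / 4)) (1 / 4)) ∧
    (∀ x₂ : ℝ, 0 < x₂ →
      (∀ y : ℝ, 0 < y → rcU2 1 (rcF1B 1 y) y ≤ rcU2 1 (rcF1B 1 x₂) x₂) →
      x₂ = 1 / 4) ∧
    rcF1B 1 (1 / 4) = 1 / 4 := by
  have hmax : ∀ x : ℝ, 0 < x → rcU1 1 x (rcF2B 1 x) ≤ rcU1 1 (1 / 4) (rcF2B 1 (1 / 4)) :=
    fun x hx => (rcU1_one_rcF2B_one_le_quarter hx).trans_eq rcU1_one_quarter_rcF2B_one.symm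
  have huniq : ∀ x : ℝ, 0 < x →
      (∀ y : ℝ, 0 < y → rcU1 1 y (rcF2B 1 y) ≤ rcU1 1 x (rcF2B 1 x)) → x = 1 / 4 :=
    fun x hx hopt => eq_quarter_of_quarter_le_rcU1_one_rcF2B_one hx
      (rcU1_one_quarter_rcF2B_one.symm.trans_le (hopt (1 / 4) (by norm_num)))
  simp only [rcU2_one, rcF1B_one]
  exact ⟨hmax, huniq, rcF2B_one_quarter, hmax, huniq, rcF2B_one_quarter⟩
end

section
/- In the duopoly game with costs 0 ≤ c₁ ≤ c₂ and 2c₂ − c₁ < 1, the function x₂ ↦ u₂(f₁ᴮ(x₂), x₂), where f₁ᴮ(x₂) = max(1 − x₂ − c₁, 0)/2, attains its maximum over [0, ∞) at the unique point x₂ = (1 − 2c₂ + c₁)/2, so the BL equilibrium is (x₁ᴮᴸ, x₂ᴮᴸ) = ((1 − 3c₁ + 2c₂)/4, (1 − 2c₂ + c₁)/2) with payoffs u₁ᴮᴸ = (1 − 3c₁ + 2c₂)²/16 and u₂ᴮᴸ = (1 − 2c₂ + c₁)²/8. Moreover, comparing with the BB equilibrium (x₁ᴮᴮ, x₂ᴮᴮ)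 = ((1 − 2c₁ + c₂)/3, (1 − 2c₂ + c₁)/3), with payoffs u₁ᴮᴮ = (1 − 2c₁ + c₂)²/9 and u₂ᴮᴮ = (1 − 2c₂ + c₁)²/9, one has x₁ᴮᴸ < x₁ᴮᴮ, x₂ᴮᴸ > x₂ᴮᴮ, u₁ᴮᴸ < u₁ᴮᴮ, and u₂ᴮᴸ > u₂ᴮᴮ: the learning (inferior) company also exploits the learned one. -/
/-- Company 1's payoff in the duopoly game with maximal price `p = 1`. -/
noncomputable def duU1 (c₁ x₁ x₂ : ℝ) : ℝ := x₁ * (max (1 - x₁ - x₂) 0 - c₁)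

/-- Company 2's payoff in the duopoly game with maximal price `p = 1`. -/
noncomputable def duU2 (c₂ x₁ x₂ : ℝ) : ℝ := x₂ * (max (1 - x₁ - x₂) 0 - c₂)

/-- Company 1's B-response in the duopoly game. -/
noncomputable def duF1B (c₁ x₂ : ℝ) : ℝ := max (1 - x₂ - c₁) 0 / 2

lemma du_aux_lt (c₁ c₂ x₂ : ℝ) (hc₁ : 0 ≤ c₁) (hc : c₁ ≤ c₂)
    (hlt : 2 * c₂ - c₁ < 1) (hx : 0 ≤ x₂) (hne : x₂ ≠ (1 - 2 * c₂ + c₁) / 2) :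
    duU2 c₂ (duF1B c₁ x₂) x₂ < (1 - 2 * c₂ + c₁) ^ 2 / 8 := by
  have hA : 0 < 1 - 2 * c₂ + c₁ := by linarith
  unfold duU2 duF1B
  rcases le_or_gt x₂ (1 - c₁) with h | h
  · have h1 : max (1 - x₂ - c₁) 0 = 1 - x₂ - c₁ := max_eq_left (by linarith)
    rw [h1]
    have h2 : max (1 - (1 - x₂ - c₁) / 2 - x₂) 0 = (1 - x₂ + c₁) / 2 :=
      by rw [max_eq_left (by linarith)]; ring
    rw [h2]
    have hne' : (1 - 2 * c₂ + c₁) - 2 * x₂ ≠ 0 := fun h => hne (by linarith)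
    have hsq := pow_two_pos_of_ne_zero hne'
    nlinarith [hsq]
  · have h1 : max (1 - x₂ - c₁) 0 = 0 := max_eq_right (by linarith)
    rw [h1]
    have h2 : max (1 - 0 / 2 - x₂) 0 ≤ c₁ := by
      apply max_le (by linarith) hc₁
    have : x₂ * (max (1 - 0 / 2 - x₂) 0 - c₂) ≤ 0 := by
      apply mul_nonpos_of_nonneg_of_nonpos hx
      linarith
    nlinarith

lemma du_aux_eq (c₁ c₂ : ℝ) (hc₁ : 0 ≤ c₁) (hc : c₁ ≤ c₂)
    (hlt : 2 * c₂ - c₁ < 1) :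
    duU2 c₂ (duF1B c₁ ((1 - 2 * c₂ + c₁) / 2)) ((1 - 2 * c₂ + c₁) / 2) =
      (1 - 2 * c₂ + c₁) ^ 2 / 8 := by
  unfold duU2 duF1B
  have h1 : max (1 - (1 - 2 * c₂ + c₁) / 2 - c₁) 0 = (1 - 3 * c₁ + 2 * c₂) / 2 := by
    rw [max_eq_left (by linarith)]; ring
  rw [h1]
  rw [max_eq_left (by linarith)]
  ring

/-- In the duopoly game with `2c₂ − c₁ < 1`, the function
`x₂ ↦ u₂(f₁ᴮ(x₂), x₂)` attains its maximum over `[0, ∞)` at the unique point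
`(1 − 2c₂ + c₁)/2`; the BL equilibrium is
`((1 − 3c₁ + 2c₂)/4, (1 − 2c₂ + c₁)/2)` with payoffs `(1 − 3c₁ + 2c₂)²/16`
and `(1 − 2c₂ + c₁)²/8`. Comparing with the BB (Nash) equilibrium:
`x₁ᴮᴸ < x₁ᴮᴮ`, `x₂ᴮᴸ > x₂ᴮᴮ`, `u₁ᴮᴸ < u₁ᴮᴮ`, `u₂ᴮᴸ > u₂ᴮᴮ` — the learning
(inferior) company also exploits the learned one. -/
theorem du_bl_equilibrium_and_comparison (c₁ c₂ : ℝ) (hc₁ : 0 ≤ c₁)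
    (hc : c₁ ≤ c₂) (hlt : 2 * c₂ - c₁ < 1) :
    (∀ x₂ : ℝ, 0 ≤ x₂ →
      duU2 c₂ (duF1B c₁ x₂) x₂ ≤
        duU2 c₂ (duF1B c₁ ((1 - 2 * c₂ + c₁) / 2)) ((1 - 2 * c₂ + c₁) / 2)) ∧
    (∀ x₂ : ℝ, 0 ≤ x₂ →
      (∀ y : ℝ, 0 ≤ y → duU2 c₂ (duF1B c₁ y) y ≤ duU2 c₂ (duF1B c₁ x₂) x₂) →
      x₂ = (1 - 2 * c₂ + c₁) / 2) ∧
    duF1B c₁ ((1 - 2 * c₂ + c₁) / 2) = (1 - 3 * c₁ + 2 * c₂) / 4 ∧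
    duU1 c₁ ((1 - 3 * c₁ + 2 * c₂) / 4) ((1 - 2 * c₂ + c₁) / 2) =
      (1 - 3 * c₁ + 2 * c₂) ^ 2 / 16 ∧
    duU2 c₂ ((1 - 3 * c₁ + 2 * c₂) / 4) ((1 - 2 * c₂ + c₁) / 2) =
      (1 - 2 * c₂ + c₁) ^ 2 / 8 ∧
    (1 - 3 * c₁ + 2 * c₂) / 4 < (1 - 2 * c₁ + c₂) / 3 ∧
    (1 - 2 * c₂ + c₁) / 2 > (1 - 2 * c₂ + c₁) / 3 ∧
    (1 - 3 * c₁ + 2 * c₂) ^ 2 / 16 < (1 - 2 * c₁ + c₂) ^ 2 / 9 ∧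
    (1 - 2 * c₂ + c₁) ^ 2 / 8 > (1 - 2 * c₂ + c₁) ^ 2 / 9 := by
  have hA : 0 < 1 - 2 * c₂ + c₁ := by linarith
  have heq := du_aux_eq c₁ c₂ hc₁ hc hlt
  refine ⟨?_, ?_, ?_, ?_, ?_, ?_, ?_, ?_, ?_⟩
  · intro x₂ hx
    rw [heq]
    by_cases hne : x₂ = (1 - 2 * c₂ + c₁) / 2
    · rw [hne, heq]
    · exact le_of_lt (du_aux_lt c₁ c₂ x₂ hc₁ hc hlt hx hne)
  · intro x₂ hx hmax
    by_contra hne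
    have h1 := hmax ((1 - 2 * c₂ + c₁) / 2) (by linarith)
    rw [heq] at h1
    have h2 := du_aux_lt c₁ c₂ x₂ hc₁ hc hlt hx hne
    linarith
  · unfold duF1B
    rw [max_eq_left (by linarith)]; ring
  · unfold duU1
    rw [max_eq_left (by linarith)]; ring
  · unfold duU2
    rw [max_eq_left (by linarith)]; ring
  · linarith
  · linarith
  · nlinarith
  · nlinarith [sq_nonneg (1 - 2 * c₂ + c₁)]
end
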